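/- Let $X_1,\dots,X_n$ be i.i.d. uniform on $[0,s]$ with order statistics $X_{(1)} \le \dots \le X_{(n)}$, and let $0 < d < s$, $n_{\min} = \lfloor s/d \rfloor$. The probability that the geometric graph on $\{X_i\}$ with connection radius $d$ is connected (i.e., all interior gaps $X_{(i)} - X_{(i-1)} \le d$ for $2 \le i \le n$) equals $\pcon = \sum_{i=0}^{n_{\min}} (-1)^i \binom{n-1}{i} \left(1 - \frac{id}{s}\right)^n$. -/

import Mathlib

open MeasureTheory Finset Nat

noncomputable def unif (s : ℝ) : Measure ℝ :=
  (ENNReal.ofReal s⁻¹) • (volume.restrict (Set.Icc 0 s))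

noncomputable def iidUnif (n : ℕ) (s : ℝ) : Measure (Fin n → ℝ) :=
  Measure.pi fun _ => unif s

noncomputable def orderStat {n : ℕ} (x : Fin n → ℝ) : Fin n → ℝ :=
  x ∘ Tuple.sort x

noncomputable def slack (n : ℕ) (s : ℝ) (x : Fin n → ℝ) (i : Fin (n + 1)) : ℝ :=
  (if h : (i : ℕ) < n then orderStat x ⟨i, h⟩ else s) -
  (if h : 0 < (i : ℕ) then orderStat x ⟨(i : ℕ) - 1, by have := i.isLt; omega⟩ else 0)

/-!
Off the null set of tuples with repeated values, the cube `[0, s]ⁿ` is the disjoint union of the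
`n!` images of the ordered simplex `0 ≤ x₀ < ⋯ < xₙ₋₁ ≤ s` under coordinate permutations, and the
event depends only on the sorted sample; so the probability is `n! / sⁿ` times the volume of the
part of that simplex where all consecutive gaps are `≤ d`. By inclusion–exclusion over the set `I`
of gaps exceeding `d`, it suffices to know the volume of the ordered simplex with the gaps in `I`
longer than `d`; shrinking each of those gaps by `d` is a translation onto the ordered simplex of
side `s - |I| d`, of volume `(s - |I| d)₊ⁿ / n!`. Grouping by `|I|` produces the binomial
coefficients, and the terms with `|I| > s / d` vanish.
-/

theorem measureReal_biInter_compl_eq_sum_powerset {α ι : Type*} [MeasurableSpace α]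
    [DecidableEq ι] {B : ι → Set α} (hB : ∀ i, MeasurableSet (B i)) (F : Finset ι)
    (μ : Measure α) [IsFiniteMeasure μ] :
    μ.real (⋂ i ∈ F, (B i)ᶜ) = ∑ I ∈ F.powerset, (-1) ^ #I * μ.real (⋂ i ∈ I, B i) := by
  -- The inductive step uses the hypothesis for both `μ` and `μ.restrict (B a)`.
  induction F using Finset.induction_on generalizing μ with
  | empty => simp
  | insert a F ha ih =>
    set X := ⋂ i ∈ F, (B i)ᶜ
    have hX : MeasurableSet X := Finset.measurableSet_biInter F fun i _ => (hB i).compl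
    have hdiff : μ.real ((B a)ᶜ ∩ X) = μ.real X - (μ.restrict (B a)).real X := by
      rw [measureReal_restrict_apply hX, Set.inter_comm, ← Set.sdiff_eq]
      linarith [measureReal_inter_add_sdiff (μ := μ) (s := X) (hB a)]
    rw [Finset.set_biInter_insert, hdiff, ih, ih, Finset.sum_powerset_insert ha, sub_eq_add_neg,
      ← Finset.sum_neg_distrib]
    refine congrArg _ (Finset.sum_congr rfl fun I hI => ?_)
    rw [Finset.card_insert_of_notMem fun h => ha (Finset.mem_powerset.1 hI h),
      Finset.set_biInter_insert,
      measureReal_restrict_apply (Finset.measurableSet_biInter I fun i _ => hB i), Set.inter_comm]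
    ring

theorem measurableSet_setOf_strictMono {n : ℕ} :
    MeasurableSet {x : Fin n → ℝ | StrictMono x} := by
  simp only [StrictMono, Set.ofPred_forall]
  exact .iInter fun i => .iInter fun j => .iInter fun _ =>
    measurableSet_lt (measurable_pi_apply i) (measurable_pi_apply j)

theorem volume_setOf_not_injective {n : ℕ} :
    volume {x : Fin n → ℝ | ¬ Function.Injective x} = 0 := by
  have hsub : {x : Fin n → ℝ | ¬ Function.Injective x} ⊆ ⋃ (i) (j) (_ : i ≠ j),
      (LinearMap.ker ((LinearMap.proj i : (Fin n → ℝ) →ₗ[ℝ] ℝ) - LinearMap.proj j) : Set _) := by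
    intro x hx
    obtain ⟨i, j, hij, hne⟩ : ∃ i j, x i = x j ∧ i ≠ j := by
      simpa [Function.Injective] using hx
    simp only [Set.mem_iUnion]
    exact ⟨i, j, hne, by simp [hij]⟩
  refine measure_mono_null hsub (measure_iUnion_null fun i => measure_iUnion_null fun j =>
    measure_iUnion_null fun hij => Measure.addHaar_submodule _ _ fun htop => ?_)
  have : Pi.single i (1 : ℝ) ∈ LinearMap.ker (LinearMap.proj i - LinearMap.proj j) :=
    htop ▸ Submodule.mem_top
  simp [hij.symm] at this

theorem orderStat_eq_comp_of_strictMono {n : ℕ} {x : Fin n → ℝ} {σ : Equiv.Perm (Fin n)}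
    (h : StrictMono (x ∘ σ)) : orderStat x = x ∘ σ :=
  (Tuple.comp_sort_eq_comp_iff_monotone.2 h.monotone).symm

theorem sort_eq_of_strictMono {n : ℕ} {x : Fin n → ℝ} {σ : Equiv.Perm (Fin n)}
    (h : StrictMono (x ∘ σ)) : Tuple.sort x = σ :=
  (Tuple.eq_sort_iff.2 ⟨h.monotone, fun _ _ hij heq => absurd heq (h hij).ne⟩).symm

theorem volume_setOf_orderStat {n : ℕ} (C : (Fin n → ℝ) → Prop)
    (hC : MeasurableSet {x | StrictMono x ∧ C x}) :
    volume {x | C (orderStat x)} = n ! * volume {x | StrictMono x ∧ C x} := by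
  set S := {x : Fin n → ℝ | StrictMono x ∧ C x}
  let perm (σ : Equiv.Perm (Fin n)) : (Fin n → ℝ) ≃ᵐ (Fin n → ℝ) :=
    MeasurableEquiv.piCongrLeft (fun _ => ℝ) σ.symm
  have hperm (σ : Equiv.Perm (Fin n)) (x : Fin n → ℝ) : perm σ x = x ∘ σ := by
    funext i
    simp [perm, MeasurableEquiv.piCongrLeft, Equiv.piCongrLeft_apply]
  have hunion : {x | C (orderStat x)} ∩ {x | Function.Injective x} = ⋃ σ, perm σ ⁻¹' S := by
    ext x
    simp only [Set.mem_inter_iff, Set.mem_ofPred_eq, Set.mem_iUnion, Set.mem_preimage, hperm, S]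
    constructor
    · rintro ⟨hCx, hinj⟩
      exact ⟨Tuple.sort x, (Tuple.monotone_sort x).strictMono_of_injective
        (hinj.comp (Tuple.sort x).injective), hCx⟩
    · rintro ⟨σ, hmono, hCσ⟩
      exact ⟨orderStat_eq_comp_of_strictMono hmono ▸ hCσ,
        hmono.injective.of_comp_right σ.surjective⟩
  have hdisj : Pairwise (Function.onFun Disjoint fun σ => perm σ ⁻¹' S) := by
    refine fun σ τ hne => Set.disjoint_left.2 fun x hσ hτ => hne ?_
    simp only [Set.mem_preimage, hperm, S, Set.mem_ofPred_eq] at hσ hτ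
    exact (sort_eq_of_strictMono hσ.1).symm.trans (sort_eq_of_strictMono hτ.1)
  calc volume {x | C (orderStat x)} = volume (⋃ σ, perm σ ⁻¹' S) := by
        rw [← hunion, measure_inter_conull]
        simpa only [Set.compl_ofPred] using volume_setOf_not_injective
    _ = ∑ σ, volume (perm σ ⁻¹' S) := by
        rw [measure_iUnion hdisj fun σ => (perm σ).measurable hC, tsum_fintype]
    _ = n ! * volume S := by
        rw [Finset.sum_congr rfl fun σ _ => (volume_measurePreserving_piCongrLeft
          (fun _ => ℝ) σ.symm).measure_preimage_equiv S]
        simp [Fintype.card_perm]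

theorem forall_orderStat_iff {n : ℕ} (x : Fin n → ℝ) (p : ℝ → Prop) :
    (∀ i, p (orderStat x i)) ↔ ∀ i, p (x i) :=
  (Tuple.sort x).forall_congr_right (q := fun j => p (x j))

def orderedSimplex (n : ℕ) (t : ℝ) : Set (Fin n → ℝ) :=
  {x | StrictMono x ∧ ∀ i, x i ∈ Set.Icc 0 t}

theorem measurableSet_orderedSimplex (n : ℕ) (t : ℝ) : MeasurableSet (orderedSimplex n t) := by
  simp only [orderedSimplex, Set.ofPred_and, Set.ofPred_forall]
  exact measurableSet_setOf_strictMono.inter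
    (.iInter fun i => measurableSet_Icc.preimage (measurable_pi_apply i))

theorem volume_orderedSimplex_lt_top (n : ℕ) (t : ℝ) : volume (orderedSimplex n t) < ⊤ :=
  (measure_mono (show orderedSimplex n t ⊆ Set.Icc 0 fun _ => t from
    fun _ hx => ⟨fun i => (hx.2 i).1, fun i => (hx.2 i).2⟩)).trans_lt isCompact_Icc.measure_lt_top

theorem measureReal_orderedSimplex (n : ℕ) {t : ℝ} (ht : 0 ≤ t) :
    volume.real (orderedSimplex n t) = t ^ n / n ! := by
  have hbox : {x : Fin n → ℝ | ∀ i, orderStat x i ∈ Set.Icc 0 t} =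
      Set.univ.pi fun _ => Set.Icc 0 t := by
    ext x
    simp only [Set.mem_ofPred_eq, Set.mem_pi, Set.mem_univ, true_implies]
    exact forall_orderStat_iff x (· ∈ Set.Icc 0 t)
  have h := congrArg ENNReal.toReal
    (volume_setOf_orderStat (fun x => ∀ i, x i ∈ Set.Icc 0 t) (measurableSet_orderedSimplex n t))
  rw [hbox, volume_pi_pi] at h
  simp only [Real.volume_Icc, sub_zero, Finset.prod_const, Finset.card_univ, Fintype.card_fin,
    ENNReal.toReal_pow, ENNReal.toReal_ofReal ht, ENNReal.toReal_mul,
    ENNReal.toReal_natCast] at h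
  rw [eq_div_iff (by positivity), h, mul_comm, measureReal_def, orderedSimplex]

theorem mem_orderedSimplex_succ_iff {m : ℕ} {t : ℝ} {y : Fin (m + 1) → ℝ} :
    y ∈ orderedSimplex (m + 1) t ↔
      0 ≤ y 0 ∧ (∀ i : Fin m, y i.castSucc < y i.succ) ∧ y (Fin.last m) ≤ t := by
  rw [orderedSimplex, Set.mem_ofPred_eq, Fin.strictMono_iff_lt_succ]
  constructor
  · rintro ⟨hmono, hbound⟩
    exact ⟨(hbound 0).1, hmono, (hbound _).2⟩
  · rintro ⟨h0, hmono, hlast⟩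
    have hy := (Fin.strictMono_iff_lt_succ.2 hmono).monotone
    exact ⟨hmono, fun i => ⟨h0.trans (hy (Fin.zero_le i)), (hy (Fin.le_last i)).trans hlast⟩⟩

theorem measureReal_orderedSimplex_succ (m : ℕ) (t : ℝ) :
    volume.real (orderedSimplex (m + 1) t) = max t 0 ^ (m + 1) / (m + 1)! := by
  rcases le_or_gt 0 t with ht | ht
  · rw [max_eq_left ht, measureReal_orderedSimplex _ ht]
  · have hempty : orderedSimplex (m + 1) t = ∅ :=
      Set.eq_empty_of_forall_notMem fun x hx => by linarith [(hx.2 0).1, (hx.2 0).2]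
    simp [hempty, max_eq_right ht.le]

def longGap {m : ℕ} (d : ℝ) (i : Fin m) : Set (Fin (m + 1) → ℝ) :=
  {x | d < x i.succ - x i.castSucc}

theorem measurableSet_longGap {m : ℕ} (d : ℝ) (i : Fin m) : MeasurableSet (longGap d i) :=
  measurableSet_lt measurable_const (by fun_prop)

theorem volume_biInter_longGap_inter_orderedSimplex {m : ℕ} {d : ℝ} (hd : 0 ≤ d)
    (I : Finset (Fin m)) (t : ℝ) :
    volume ((⋂ i ∈ I, longGap d i) ∩ orderedSimplex (m + 1) t) =
      volume (orderedSimplex (m + 1) (t - #I * d)) := by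
  -- `c` rises by `d` across each gap in `I`, so `x ↦ x - c` shortens exactly those gaps by `d`.
  let c : Fin (m + 1) → ℝ := fun k => ∑ j ∈ I, if j.castSucc < k then d else 0
  have hc0 : c 0 = 0 := by simp [c]
  have hclast : c (Fin.last m) = #I * d := by simp [c, Fin.castSucc_lt_last]
  have hcsucc (i : Fin m) : c i.succ - c i.castSucc = if i ∈ I then d else 0 := by
    simp only [c, ← Finset.sum_sub_distrib, Fin.castSucc_lt_succ_iff, Fin.castSucc_lt_castSucc_iff]
    rw [← Finset.sum_ite_eq' I i fun _ => d]
    refine Finset.sum_congr rfl fun j _ => ?_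
    rcases lt_trichotomy j i with h | rfl | h
    · simp [h, h.le, h.ne]
    · simp
    · simp [not_le.2 h, not_lt.2 h.le, h.ne']
  have hpre : (⋂ i ∈ I, longGap d i) ∩ orderedSimplex (m + 1) t =
      (fun x => x - c) ⁻¹' orderedSimplex (m + 1) (t - #I * d) := by
    ext x
    simp only [Set.mem_inter_iff, Set.mem_iInter₂, Set.mem_preimage, mem_orderedSimplex_succ_iff,
      Pi.sub_apply, hc0, hclast, sub_zero, sub_le_sub_iff_right, longGap, Set.mem_ofPred_eq]
    have hgap (i : Fin m) : ((i ∈ I → d < x i.succ - x i.castSucc) ∧ x i.castSucc < x i.succ) ↔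
        x i.castSucc - c i.castSucc < x i.succ - c i.succ := by
      have := hcsucc i
      split_ifs at this with hi
      · constructor
        · rintro ⟨h, -⟩; linarith [h hi]
        · intro h; exact ⟨fun _ => by linarith, by linarith⟩
      · constructor
        · rintro ⟨-, h⟩; linarith
        · intro h; exact ⟨fun h' => absurd h' hi, by linarith⟩
    simp only [← hgap, forall_and]
    tauto
  rw [hpre]
  simp only [sub_eq_add_neg]
  exact measure_preimage_add_right volume (-c) _

theorem measureReal_biInter_compl_longGap_inter_orderedSimplex (m : ℕ) {s d : ℝ} (hs : 0 < s)
    (hd : 0 ≤ d) :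
    volume.real ((⋂ j, (longGap d j)ᶜ) ∩ orderedSimplex (m + 1) s) =
      s ^ (m + 1) / (m + 1)! *
        ∑ k ∈ range (m + 1), (-1) ^ k * m.choose k * max (1 - k * d / s) 0 ^ (m + 1) := by
  set μ := volume.restrict (orderedSimplex (m + 1) s)
  have : IsFiniteMeasure μ := isFiniteMeasure_restrict.2 (volume_orderedSimplex_lt_top _ _).ne
  have hterm (I : Finset (Fin m)) :
      μ.real (⋂ i ∈ I, longGap d i) = max (s - #I * d) 0 ^ (m + 1) / (m + 1)! := by
    rw [measureReal_restrict_apply' (measurableSet_orderedSimplex _ _), measureReal_def,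
      volume_biInter_longGap_inter_orderedSimplex hd, ← measureReal_def,
      measureReal_orderedSimplex_succ]
  have hIE := measureReal_biInter_compl_eq_sum_powerset (measurableSet_longGap d) univ μ
  simp only [Finset.mem_univ, Set.iInter_true, hterm] at hIE
  rw [← measureReal_restrict_apply' (measurableSet_orderedSimplex _ _), hIE,
    Finset.sum_powerset_apply_card (fun k => (-1) ^ k * (max (s - k * d) 0 ^ (m + 1) / (m + 1)!)),
    Finset.card_univ, Fintype.card_fin, Finset.mul_sum]
  refine Finset.sum_congr rfl fun k _ => ?_
  have hmax : max (s - k * d) 0 = s * max (1 - k * d / s) 0 := by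
    rw [mul_max_of_nonneg _ _ hs.le, mul_zero, mul_sub, mul_one, mul_div_cancel₀ _ hs.ne']
  rw [hmax, mul_pow, nsmul_eq_mul]
  ring

theorem sum_range_choose_mul_max_pow (m : ℕ) {s d : ℝ} (hs : 0 < s) (hd : 0 < d) :
    ∑ k ∈ range (m + 1), (-1) ^ k * m.choose k * max (1 - k * d / s) 0 ^ (m + 1) =
      ∑ k ∈ range (⌊s / d⌋₊ + 1), (-1) ^ k * m.choose k * (1 - k * d / s) ^ (m + 1) := by
  have hpos (k : ℕ) : 0 ≤ 1 - k * d / s ↔ k ≤ ⌊s / d⌋₊ := by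
    rw [Nat.le_floor_iff (by positivity), sub_nonneg, div_le_one hs, le_div_iff₀ hd]
  have hchoose (k : ℕ) (hk : k ≥ m + 1) :
      (-1) ^ k * m.choose k * max (1 - k * d / s) 0 ^ (m + 1) = (0 : ℝ) := by
    simp [Nat.choose_eq_zero_of_lt hk]
  have hmax (k : ℕ) (hk : k ≥ ⌊s / d⌋₊ + 1) :
      (-1) ^ k * m.choose k * max (1 - k * d / s) 0 ^ (m + 1) = (0 : ℝ) := by
    rw [max_eq_right (not_le.1 fun h => by have := (hpos k).1 h; omega).le]
    simp
  rw [← eventually_constant_sum hchoose (Nat.le_add_right (m + 1) (⌊s / d⌋₊ + 1)),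
    eventually_constant_sum hmax (Nat.le_add_left _ _)]
  refine Finset.sum_congr rfl fun k hk => ?_
  rw [max_eq_left ((hpos k).2 (Nat.lt_succ_iff.1 (Finset.mem_range.1 hk)))]

theorem iidUnif_apply (n : ℕ) (s : ℝ) (A : Set (Fin n → ℝ)) :
    iidUnif n s A =
      ENNReal.ofReal s⁻¹ ^ n * volume (A ∩ Set.univ.pi fun _ => Set.Icc 0 s) := by
  have : IsFiniteMeasure (unif s) := ⟨by
    rw [unif, Measure.smul_apply, Measure.restrict_apply_univ, Real.volume_Icc, smul_eq_mul]
    exact ENNReal.mul_lt_top ENNReal.ofReal_lt_top ENNReal.ofReal_lt_top⟩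
  have hpi : iidUnif n s =
      ENNReal.ofReal s⁻¹ ^ n • volume.restrict (Set.univ.pi fun _ : Fin n => Set.Icc 0 s) := by
    refine Measure.pi_eq fun t ht => ?_
    simp only [unif, Measure.smul_apply, smul_eq_mul, Measure.restrict_apply (ht _),
      Measure.restrict_apply' (MeasurableSet.univ_pi fun _ => measurableSet_Icc),
      ← Set.pi_inter_distrib, volume_pi_pi, Finset.prod_mul_distrib, Finset.prod_const,
      Finset.card_univ, Fintype.card_fin]
  rw [hpi, Measure.smul_apply, smul_eq_mul,
    Measure.restrict_apply' (MeasurableSet.univ_pi fun _ => measurableSet_Icc)]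

theorem forall_slack_le_iff {m : ℕ} (s d : ℝ) (x : Fin (m + 1) → ℝ) :
    (∀ i : Fin (m + 2), 0 < (i : ℕ) → (i : ℕ) < m + 1 → slack (m + 1) s x i ≤ d) ↔
      ∀ j : Fin m, orderStat x j.succ - orderStat x j.castSucc ≤ d := by
  constructor
  · rintro h ⟨j, hj⟩
    simpa [slack, hj] using h ⟨j + 1, by omega⟩ (by simp) (by simpa)
  · intro h i hi0 hin
    obtain ⟨j, rfl⟩ : ∃ j : Fin m, i = j.succ.castSucc :=
      ⟨⟨i - 1, by omega⟩, Fin.ext (by simp; omega)⟩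
    obtain ⟨j, hj⟩ := j
    simpa [slack, hj] using h ⟨j, hj⟩

theorem iidUnif_setOf_forall_slack_le (m : ℕ) {s : ℝ} (hs : 0 ≤ s) (d : ℝ) :
    iidUnif (m + 1) s {ω | ∀ i : Fin (m + 2), 0 < (i : ℕ) → (i : ℕ) < m + 1 →
        slack (m + 1) s ω i ≤ d} =
      ENNReal.ofReal (s⁻¹ ^ (m + 1) * (m + 1)! *
        volume.real ((⋂ j, (longGap d j)ᶜ) ∩ orderedSimplex (m + 1) s)) := by
  let C (y : Fin (m + 1) → ℝ) : Prop :=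
    (∀ i, y i ∈ Set.Icc 0 s) ∧ ∀ j : Fin m, y j.succ - y j.castSucc ≤ d
  have hevent : {ω | ∀ i : Fin (m + 2), 0 < (i : ℕ) → (i : ℕ) < m + 1 → slack (m + 1) s ω i ≤ d}
      ∩ (Set.univ.pi fun _ => Set.Icc 0 s) = {x | C (orderStat x)} := by
    ext x
    simp only [Set.mem_inter_iff, Set.mem_ofPred_eq, Set.mem_pi, Set.mem_univ, true_implies,
      forall_slack_le_iff, forall_orderStat_iff x (· ∈ Set.Icc 0 s), C]
    exact and_comm
  have hsorted : {x | StrictMono x ∧ C x} = (⋂ j, (longGap d j)ᶜ) ∩ orderedSimplex (m + 1) s := by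
    ext x
    simp only [longGap, orderedSimplex, C, Set.mem_inter_iff, Set.mem_iInter, Set.mem_compl_iff,
      Set.mem_ofPred_eq, not_lt, sub_le_iff_le_add]
    tauto
  have hmeas : MeasurableSet {x | StrictMono x ∧ C x} := hsorted ▸
    (MeasurableSet.iInter fun j => (measurableSet_longGap d j).compl).inter
      (measurableSet_orderedSimplex _ _)
  have hfin : volume ((⋂ j, (longGap d j)ᶜ) ∩ orderedSimplex (m + 1) s) ≠ ⊤ :=
    (measure_mono Set.inter_subset_right).trans_lt (volume_orderedSimplex_lt_top _ _) |>.ne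
  rw [iidUnif_apply, hevent, volume_setOf_orderStat C hmeas, hsorted, measureReal_def,
    ENNReal.ofReal_mul (by positivity), ENNReal.ofReal_toReal hfin,
    ENNReal.ofReal_mul (by positivity), ENNReal.ofReal_natCast, ENNReal.ofReal_pow (by positivity), mul_assoc]

theorem prob_connectivity_general (n : ℕ) (s d : ℝ) (hs : 0 < s) (hd : 0 < d) :
    iidUnif n s {ω | ∀ i : Fin (n + 1), 0 < (i : ℕ) → (i : ℕ) < n →
        slack n s ω i ≤ d} =
      ENNReal.ofReal (∑ i ∈ Finset.range (⌊s / d⌋₊ + 1),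
        (-1 : ℝ) ^ i * (n - 1).choose i * (1 - i * d / s) ^ n) := by
  obtain _ | m := n
  · simp [iidUnif_apply, Finset.sum_range_succ', Real.volume_Icc_pi]
  rw [iidUnif_setOf_forall_slack_le m hs.le,
    measureReal_biInter_compl_longGap_inter_orderedSimplex m hs hd.le,
    sum_range_choose_mul_max_pow m hs hd, add_tsub_cancel_right]
  have hnorm : s⁻¹ ^ (m + 1) * (m + 1)! * (s ^ (m + 1) / (m + 1)!) = 1 := by
    rw [inv_pow]
    field_simp
  rw [← mul_assoc, hnorm, one_mul]

/-- Probability of connectivity of the geometric graph: all interior spacings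
are at most d. -/
theorem prob_connectivity (n : ℕ) (s d : ℝ) (hs : 0 < s) (hd : 0 < d) (hds : d < s) :
    iidUnif n s {ω | ∀ i : Fin (n + 1), 0 < (i : ℕ) → (i : ℕ) < n →
        slack n s ω i ≤ d} =
      ENNReal.ofReal (∑ i ∈ Finset.range (⌊s / d⌋₊ + 1),
        (-1 : ℝ) ^ i * (n - 1).choose i * (1 - i * d / s) ^ n) :=
  prob_connectivity_general n s d hs hd
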